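/- Under the hypotheses of the federated Gram-Schmidt equivalence (v : Fin k → EuclideanSpace ℝ N linearly independent, ũ_i^s satisfying the federated recursion with aggregated residuals, ñ_i := Σ_t ⟨ũ_i^t, ũ_i^t⟩), the family w : Fin k → EuclideanSpace ℝ N defined blockwise by w_i^s = (1/√ñ_i) • ũ_i^s is an orthonormal family of vectors. -/

import Mathlib

/-!
Assembling the local blocks `ũ_i^s` into global vectors `U_i`, the aggregated sums
`Σ_t ⟪ũ_j^t, x^t⟫` are the global inner products `⟪U_j, x⟫`, so blockwise the federated
recursion is the classical Gram–Schmidt recursion for `v`. Hence `U = gramSchmidt v`,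
`w` is its normalisation, and orthonormality is `gramSchmidtNormed_orthonormal`.
-/

open scoped RealInnerProductSpace

/-- The local block `u^s = u ∘ Sigma.mk s` of a vertically partitioned vector `u` at site `s`. -/
def localBlock {S : ℕ} {n : Fin S → ℕ}
    (u : EuclideanSpace ℝ ((s : Fin S) × Fin (n s))) (s : Fin S) :
    EuclideanSpace ℝ (Fin (n s)) :=
  WithLp.toLp 2 (fun j => u (Sigma.mk s j))

namespace InnerProductSpace

variable {𝕜 E ι : Type*} [RCLike 𝕜] [NormedAddCommGroup E] [InnerProductSpace 𝕜 E]
  [LinearOrder ι] [LocallyFiniteOrderBot ι] [WellFoundedLT ι]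

theorem eq_gramSchmidt_of_recursion {f U : ι → E}
    (hU : ∀ i, U i = f i - ∑ j ∈ Finset.Iio i,
      (inner 𝕜 (U j) (f i) / (‖U j‖ : 𝕜) ^ 2) • U j) :
    U = gramSchmidt 𝕜 f := by
  funext i
  induction i using WellFoundedLT.induction with
  | ind i ih =>
    rw [hU, eq_sub_of_add_eq (gramSchmidt_def'' 𝕜 f i).symm]
    congr 1
    refine Finset.sum_congr rfl fun j hj => ?_
    rw [ih j (Finset.mem_Iio.mp hj)]

end InnerProductSpace

section VerticalPartition

variable {S : ℕ} {n : Fin S → ℕ}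

def assembleBlocks (u : (s : Fin S) → EuclideanSpace ℝ (Fin (n s))) :
    EuclideanSpace ℝ ((s : Fin S) × Fin (n s)) :=
  WithLp.toLp 2 fun p => u p.1 p.2

@[simp]
theorem localBlock_assembleBlocks (u : (s : Fin S) → EuclideanSpace ℝ (Fin (n s))) (s : Fin S) :
    localBlock (assembleBlocks u) s = u s :=
  rfl

theorem localBlock_injective :
    Function.Injective (localBlock (S := S) (n := n)) := by
  intro x y h
  ext ⟨s, j⟩
  exact congrArg (fun b => b s j) h

@[simp]
theorem localBlock_sub (x y : EuclideanSpace ℝ ((s : Fin S) × Fin (n s))) (s : Fin S) :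
    localBlock (x - y) s = localBlock x s - localBlock y s :=
  rfl

@[simp]
theorem localBlock_smul (c : ℝ) (x : EuclideanSpace ℝ ((s : Fin S) × Fin (n s))) (s : Fin S) :
    localBlock (c • x) s = c • localBlock x s :=
  rfl

@[simp]
theorem localBlock_sum {ι : Type*} (t : Finset ι)
    (x : ι → EuclideanSpace ℝ ((s : Fin S) × Fin (n s))) (s : Fin S) :
    localBlock (∑ i ∈ t, x i) s = ∑ i ∈ t, localBlock (x i) s := by
  ext j
  simp [localBlock]

theorem inner_eq_sum_inner_localBlock (x y : EuclideanSpace ℝ ((s : Fin S) × Fin (n s))) :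
    ⟪x, y⟫ = ∑ s : Fin S, ⟪localBlock x s, localBlock y s⟫ := by
  simp only [PiLp.inner_apply, RCLike.inner_apply, conj_trivial, localBlock]
  rw [← Finset.univ_sigma_univ, Finset.sum_sigma]

theorem inner_assembleBlocks (u : (s : Fin S) → EuclideanSpace ℝ (Fin (n s)))
    (y : EuclideanSpace ℝ ((s : Fin S) × Fin (n s))) :
    ⟪assembleBlocks u, y⟫ = ∑ s : Fin S, ⟪u s, localBlock y s⟫ := by
  simp [inner_eq_sum_inner_localBlock]

end VerticalPartition

/-- Correctness of the output of federated Gram-Schmidt (Algorithm 3): if the local families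
`ũ i s` satisfy the federated recursion with aggregated residuals, and the family `w` is
defined blockwise by `w_i^s = (1/√ñ_i) • ũ_i^s` with aggregated squared norms
`ñ_i = Σ_t ⟪ũ_i^t, ũ_i^t⟫`, then `w` is an orthonormal family of vectors. -/
theorem federated_gramSchmidt_output_orthonormal (S k : ℕ) (n : Fin S → ℕ)
    (v : Fin k → EuclideanSpace ℝ ((s : Fin S) × Fin (n s)))
    (hv : LinearIndependent ℝ v)
    (u : Fin k → (s : Fin S) → EuclideanSpace ℝ (Fin (n s)))
    (hrec : ∀ (i : Fin k) (s : Fin S), u i s =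
      localBlock (v i) s -
        ∑ j ∈ Finset.Iio i,
          ((∑ t : Fin S, ⟪u j t, localBlock (v i) t⟫) /
            (∑ t : Fin S, ⟪u j t, u j t⟫)) • u j s)
    (w : Fin k → EuclideanSpace ℝ ((s : Fin S) × Fin (n s)))
    (hw : ∀ (i : Fin k) (s : Fin S),
      localBlock (w i) s = (1 / Real.sqrt (∑ t : Fin S, ⟪u i t, u i t⟫)) • u i s) :
    Orthonormal ℝ w := by
  set U := fun i => assembleBlocks (u i)
  have hnormSq : ∀ i, ∑ t : Fin S, ⟪u i t, u i t⟫ = ‖U i‖ ^ 2 := fun i => by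
    rw [← real_inner_self_eq_norm_sq, inner_assembleBlocks]
    rfl
  have hU : U = InnerProductSpace.gramSchmidt ℝ v := by
    refine InnerProductSpace.eq_gramSchmidt_of_recursion fun i => localBlock_injective ?_
    funext s
    simp only [localBlock_sub, localBlock_sum, localBlock_smul, inner_assembleBlocks,
      RCLike.ofReal_real_eq_id, id, ← hnormSq, U, localBlock_assembleBlocks]
    exact hrec i s
  have hw_eq : w = InnerProductSpace.gramSchmidtNormed ℝ v := by
    funext i
    refine localBlock_injective (funext fun s => ?_)
    rw [hw, hnormSq, Real.sqrt_sq (norm_nonneg _), InnerProductSpace.gramSchmidtNormed, ← hU]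
    simp [U]
  exact hw_eq ▸ InnerProductSpace.gramSchmidtNormed_orthonormal hv
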